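/- Consider the Bell operator B = (A₁⁰+A₁¹)⊗(A₂¹ + A₃⁰A₄¹) + (A₁⁰−A₁¹)⊗(A₂⁰A₃¹ + A₂⁰A₄⁰) where each A_j^x is a ±1-valued observable (Hermitian with A² = I). For deterministic local assignments a_j^x ∈ {−1,+1}, the classical value (a₁⁰+a₁¹)(a₂¹ + a₃⁰a₄¹) + (a₁⁰−a₁¹)(a₂⁰a₃¹ + a₂⁰a₄⁰) is at most 4; and with the quantum choice A₁⁰ = (X+Z)/√2, A₁¹ = (X−Z)/√2 on qubit 1 and A_i⁰ = X_i, A_i¹ = Z_i for i = 2,3,4, the expectation of B in the 4-qubit cluster state |Cluster₄⟩ equals 4√2. -/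

import Mathlib

open scoped Matrix ComplexOrder

noncomputable section

namespace Stmt18

def X : Matrix (Fin 2) (Fin 2) ℂ := !![0, 1; 1, 0]

def Z : Matrix (Fin 2) (Fin 2) ℂ := !![1, 0; 0, -1]

/-- Tensor product of four single-qubit operators, as a matrix on `Fin 4 → Fin 2`. -/
def kron4 (M : Fin 4 → Matrix (Fin 2) (Fin 2) ℂ) :
    Matrix (Fin 4 → Fin 2) (Fin 4 → Fin 2) ℂ :=
  fun f g => ∏ i, M i (f i) (g i)

/-- `A₁⁰ = (X+Z)/√2`. -/
def A10 : Matrix (Fin 2) (Fin 2) ℂ := (((Real.sqrt 2)⁻¹ : ℝ) : ℂ) • (X + Z)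

/-- `A₁¹ = (X−Z)/√2`. -/
def A11 : Matrix (Fin 2) (Fin 2) ℂ := (((Real.sqrt 2)⁻¹ : ℝ) : ℂ) • (X - Z)

/-- The Bell operator `B = (A₁⁰+A₁¹)⊗(A₂¹ + A₃⁰A₄¹) + (A₁⁰−A₁¹)⊗(A₂⁰A₃¹ + A₂⁰A₄⁰)` with
the quantum choice `A_i⁰ = X_i`, `A_i¹ = Z_i` for `i = 2,3,4`. -/
def BellOp : Matrix (Fin 4 → Fin 2) (Fin 4 → Fin 2) ℂ :=
  kron4 ![A10 + A11, Z, 1, 1] + kron4 ![A10 + A11, 1, X, Z] +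
  kron4 ![A10 - A11, X, Z, 1] + kron4 ![A10 - A11, X, 1, X]

/-- Stabilizers of the 4-qubit cluster state on the line graph 1–2–3–4. -/
def g1 : Matrix (Fin 4 → Fin 2) (Fin 4 → Fin 2) ℂ := kron4 ![X, Z, 1, 1]
def g2 : Matrix (Fin 4 → Fin 2) (Fin 4 → Fin 2) ℂ := kron4 ![Z, X, Z, 1]
def g3 : Matrix (Fin 4 → Fin 2) (Fin 4 → Fin 2) ℂ := kron4 ![1, Z, X, Z]
def g4 : Matrix (Fin 4 → Fin 2) (Fin 4 → Fin 2) ℂ := kron4 ![1, 1, Z, X]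

/-! Classically, exactly one of `a₁⁰ ± a₁¹` is nonzero, equal to `±2`, and it multiplies a
bracket of absolute value at most `2`. Quantumly, `A₁⁰ ± A₁¹` are `√2 X` and `√2 Z`, so `B` is
`√2 (g₁ + g₁g₃ + g₂ + g₂g₄)`, a sum of four stabilizers, each with expectation `1`. -/

lemma kron4_mul (M N : Fin 4 → Matrix (Fin 2) (Fin 2) ℂ) :
    kron4 M * kron4 N = kron4 (fun i => M i * N i) := by
  ext f g
  simp only [Matrix.mul_apply, kron4, ← Finset.prod_mul_distrib]
  rw [← Fintype.piFinset_univ, Finset.prod_univ_sum]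

lemma kron4_smul_vecCons (c : ℂ) (M₀ M₁ M₂ M₃ : Matrix (Fin 2) (Fin 2) ℂ) :
    kron4 ![c • M₀, M₁, M₂, M₃] = c • kron4 ![M₀, M₁, M₂, M₃] := by
  ext f g
  simp only [kron4, Fin.prod_univ_four, Matrix.cons_val, Matrix.smul_apply, smul_eq_mul]
  ring

lemma Z_mul_Z : Z * Z = 1 := by
  simp [Z, Matrix.one_fin_two]

lemma g1_mul_g3 : g1 * g3 = kron4 ![X, 1, X, Z] := by
  rw [g1, g3, kron4_mul]
  congr 1
  funext i
  fin_cases i <;> simp [Z_mul_Z]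

lemma g2_mul_g4 : g2 * g4 = kron4 ![Z, X, 1, X] := by
  rw [g2, g4, kron4_mul]
  congr 1
  funext i
  fin_cases i <;> simp [Z_mul_Z]

lemma sqrt_two_inv_mul_two : ((√2)⁻¹ * 2 : ℝ) = √2 :=
  (inv_mul_eq_div (√2) 2).trans Real.div_sqrt

lemma A10_add_A11 : A10 + A11 = ((√2 : ℝ) : ℂ) • X := by
  rw [A10, A11, ← smul_add, show X + Z + (X - Z) = (2 : ℂ) • X by module, smul_smul]
  congr 1
  exact_mod_cast sqrt_two_inv_mul_two

lemma A10_sub_A11 : A10 - A11 = ((√2 : ℝ) : ℂ) • Z := by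
  rw [A10, A11, ← smul_sub, show X + Z - (X - Z) = (2 : ℂ) • Z by module, smul_smul]
  congr 1
  exact_mod_cast sqrt_two_inv_mul_two

lemma BellOp_eq : BellOp = ((√2 : ℝ) : ℂ) • (g1 + g1 * g3 + g2 + g2 * g4) := by
  rw [BellOp, A10_add_A11, A10_sub_A11, g1_mul_g3, g2_mul_g4]
  simp only [kron4_smul_vecCons, g1, g2]
  module

lemma mul_mulVec_eq_self {n α : Type*} [Fintype n] [Semiring α]
    {g h : Matrix n n α} {v : n → α} (hg : g *ᵥ v = v) (hh : h *ᵥ v = v) :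
    (g * h) *ᵥ v = v := by
  rw [← Matrix.mulVec_mulVec, hh, hg]

lemma add_mul_add_sub_mul_le_four {a b s t : ℝ} (ha : a = 1 ∨ a = -1) (hb : b = 1 ∨ b = -1)
    (hs : |s| ≤ 2) (ht : |t| ≤ 2) : (a + b) * s + (a - b) * t ≤ 4 := by
  have := abs_le.mp hs
  have := abs_le.mp ht
  rcases ha with rfl | rfl <;> rcases hb with rfl | rfl <;> linarith

lemma abs_mul_le_one_of_abs_le_one {u v : ℝ} (hu : |u| ≤ 1) (hv : |v| ≤ 1) :
    |u * v| ≤ 1 := by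
  rw [abs_mul]
  exact mul_le_one₀ hu (abs_nonneg v) hv

lemma abs_add_le_two_of_abs_le_one {u v : ℝ} (hu : |u| ≤ 1) (hv : |v| ≤ 1) : |u + v| ≤ 2 :=
  (abs_add_le u v).trans (by linarith)

/-- the classical value of the Bell expression is at most 4 for every
deterministic local ±1-assignment, while the quantum expectation of the Bell operator in
the 4-qubit cluster state (the normalized common +1-eigenvector of the stabilizers)
equals `4√2`. -/
theorem cluster_bell_inequality :
    (∀ a : Fin 4 → Fin 2 → ℝ, (∀ j x, a j x = 1 ∨ a j x = -1) →
      (a 0 0 + a 0 1) * (a 1 1 + a 2 0 * a 3 1) +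
      (a 0 0 - a 0 1) * (a 1 0 * a 2 1 + a 1 0 * a 3 0) ≤ 4) ∧
    (∀ v : (Fin 4 → Fin 2) → ℂ,
      star v ⬝ᵥ v = 1 →
      g1 *ᵥ v = v → g2 *ᵥ v = v → g3 *ᵥ v = v → g4 *ᵥ v = v →
      star v ⬝ᵥ (BellOp *ᵥ v) = ((4 * Real.sqrt 2 : ℝ) : ℂ)) := by
  constructor
  · intro a ha
    have habs : ∀ j x, |a j x| ≤ 1 := fun j x => by rcases ha j x with h | h <;> simp [h]
    exact add_mul_add_sub_mul_le_four (ha 0 0) (ha 0 1)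
      (abs_add_le_two_of_abs_le_one (habs 1 1)
        (abs_mul_le_one_of_abs_le_one (habs 2 0) (habs 3 1)))
      (abs_add_le_two_of_abs_le_one (abs_mul_le_one_of_abs_le_one (habs 1 0) (habs 2 1))
        (abs_mul_le_one_of_abs_le_one (habs 1 0) (habs 3 0)))
  · intro v hv h1 h2 h3 h4
    rw [BellOp_eq, Matrix.smul_mulVec, Matrix.add_mulVec, Matrix.add_mulVec, Matrix.add_mulVec,
      h1, h2, mul_mulVec_eq_self h1 h3, mul_mulVec_eq_self h2 h4]
    simp only [dotProduct_smul, dotProduct_add, hv, smul_eq_mul]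
    push_cast
    ring

end Stmt18

end
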